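/- arXiv:math/0604276 — 2 statements merged into one kernel-verified Lean document; each statement's English description precedes it below -/
import Mathlib

section
/- Let q = (q_0, ..., q_5) ∈ ℤ^6 satisfy the Bazaikin freeness condition, and suppose that 5 divides σ_3(q). Then 5 divides σ_2(q) and 5 divides 3σ_2(q)^2 − σ_4(q). (Interpretation: when 5 divides the order s of H^6(B_q), both p_1 = −σ_2 and 8p_2 = 3σ_2^2 − σ_4 vanish mod 5, so the homotopy invariant p_2 + 2p_1^2 mod 5 gives no further information.) -/
/-- The `k`-th elementary symmetric polynomial of the tuple `q`. -/
def esymm {n : ℕ} (k : ℕ) (q : Fin n → ℤ) : ℤ :=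
  ∑ t ∈ Finset.univ.powersetCard k, ∏ i ∈ t, q i

/-- The Bazaikin freeness condition: the entries sum to zero, all entries are odd,
and `gcd (q a + q b, q c + q d) = 2` for all pairwise distinct indices `a b c d`. -/
def BazaikinFree (q : Fin 6 → ℤ) : Prop :=
  (∑ i, q i) = 0 ∧ (∀ i, Odd (q i)) ∧
    ∀ a b c d : Fin 6, a ≠ b → a ≠ c → a ≠ d → b ≠ c → b ≠ d → c ≠ d →
      Int.gcd (q a + q b) (q c + q d) = 2

/-- The positive curvature condition: there is an index `i₀` such that
`q i + q j > 0` for all pairs `i < j` avoiding `i₀`, or `q i + q j < 0` for all such pairs. -/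
def PosCurv (q : Fin 6 → ℤ) : Prop :=
  ∃ i₀ : Fin 6,
    (∀ i j : Fin 6, i < j → i ≠ i₀ → j ≠ i₀ → 0 < q i + q j) ∨
    (∀ i j : Fin 6, i < j → i ≠ i₀ → j ≠ i₀ → q i + q j < 0)

lemma esymm2_expand (q : Fin 6 → ℤ) : esymm 2 q = q 0*q 1 + q 0*q 2 + q 0*q 3 + q 0*q 4 + q 0*q 5 + q 1*q 2 + q 1*q 3 + q 1*q 4 + q 1*q 5 + q 2*q 3 + q 2*q 4 + q 2*q 5 + q 3*q 4 + q 3*q 5 + q 4*q 5 := by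
  show (∑ t ∈ Finset.univ.powersetCard 2, ∏ i ∈ t, q i) = _
  rw [show (Finset.univ.powersetCard 2 : Finset (Finset (Fin 6))) = {{4,5},{3,5},{3,4},{2,5},{2,4},{2,3},{1,5},{1,4},{1,3},{1,2},{0,5},{0,4},{0,3},{0,2},{0,1}} from rfl]
  simp (config := { decide := true }) [Finset.sum_insert, Finset.prod_insert]
  ring

lemma esymm3_expand (q : Fin 6 → ℤ) : esymm 3 q = q 0*q 1*q 2 + q 0*q 1*q 3 + q 0*q 1*q 4 + q 0*q 1*q 5 + q 0*q 2*q 3 + q 0*q 2*q 4 + q 0*q 2*q 5 + q 0*q 3*q 4 + q 0*q 3*q 5 + q 0*q 4*q 5 + q 1*q 2*q 3 + q 1*q 2*q 4 + q 1*q 2*q 5 + q 1*q 3*q 4 + q 1*q 3*q 5 + q 1*q 4*q 5 + q 2*q 3*q 4 + q 2*q 3*q 5 + q 2*q 4*q 5 + q 3*q 4*q 5 := by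
  show (∑ t ∈ Finset.univ.powersetCard 3, ∏ i ∈ t, q i) = _
  rw [show (Finset.univ.powersetCard 3 : Finset (Finset (Fin 6))) = {{3,4,5},{2,4,5},{2,3,5},{2,3,4},{1,4,5},{1,3,5},{1,3,4},{1,2,5},{1,2,4},{1,2,3},{0,4,5},{0,3,5},{0,3,4},{0,2,5},{0,2,4},{0,2,3},{0,1,5},{0,1,4},{0,1,3},{0,1,2}} from rfl]
  simp (config := { decide := true }) [Finset.sum_insert, Finset.prod_insert]
  ring

lemma esymm4_expand (q : Fin 6 → ℤ) : esymm 4 q = q 0*q 1*q 2*q 3 + q 0*q 1*q 2*q 4 + q 0*q 1*q 2*q 5 + q 0*q 1*q 3*q 4 + q 0*q 1*q 3*q 5 + q 0*q 1*q 4*q 5 + q 0*q 2*q 3*q 4 + q 0*q 2*q 3*q 5 + q 0*q 2*q 4*q 5 + q 0*q 3*q 4*q 5 + q 1*q 2*q 3*q 4 + q 1*q 2*q 3*q 5 + q 1*q 2*q 4*q 5 + q 1*q 3*q 4*q 5 + q 2*q 3*q 4*q 5 := by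
  show (∑ t ∈ Finset.univ.powersetCard 4, ∏ i ∈ t, q i) = _
  rw [show (Finset.univ.powersetCard 4 : Finset (Finset (Fin 6))) = {{2,3,4,5},{1,3,4,5},{1,2,4,5},{1,2,3,5},{1,2,3,4},{0,3,4,5},{0,2,4,5},{0,2,3,5},{0,2,3,4},{0,1,4,5},{0,1,3,5},{0,1,3,4},{0,1,2,5},{0,1,2,4},{0,1,2,3}} from rfl]
  simp (config := { decide := true }) [Finset.sum_insert, Finset.prod_insert]
  ring

set_option maxRecDepth 100000 in
set_option maxHeartbeats 4000000 in
set_option synthInstance.maxHeartbeats 1000000 in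
set_option synthInstance.maxSize 2000 in
lemma key5 : ∀ x0 x1 x2 x3 x4 x5 : ZMod 5,
    x0 + x1 + x2 + x3 + x4 + x5 = 0 →
    x0*x1*x2 + x0*x1*x3 + x0*x1*x4 + x0*x1*x5 + x0*x2*x3 + x0*x2*x4 + x0*x2*x5 + x0*x3*x4 + x0*x3*x5 + x0*x4*x5 + x1*x2*x3 + x1*x2*x4 + x1*x2*x5 + x1*x3*x4 + x1*x3*x5 + x1*x4*x5 + x2*x3*x4 + x2*x3*x5 + x2*x4*x5 + x3*x4*x5 = 0 →
    (¬(x0 + x1 = 0 ∧ x2 + x3 = 0) ∧ ¬(x0 + x1 = 0 ∧ x2 + x4 = 0) ∧ ¬(x0 + x1 = 0 ∧ x2 + x5 = 0) ∧ ¬(x0 + x1 = 0 ∧ x3 + x4 = 0) ∧ ¬(x0 + x1 = 0 ∧ x3 + x5 = 0) ∧ ¬(x0 + x1 = 0 ∧ x4 + x5 = 0) ∧ ¬(x0 + x2 = 0 ∧ x1 + x3 = 0) ∧ ¬(x0 + x2 = 0 ∧ x1 + x4 = 0) ∧ ¬(x0 + x2 = 0 ∧ x1 + x5 = 0) ∧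 ¬(x0 + x2 = 0 ∧ x3 + x4 = 0) ∧ ¬(x0 + x2 = 0 ∧ x3 + x5 = 0) ∧ ¬(x0 + x2 = 0 ∧ x4 + x5 = 0) ∧ ¬(x0 + x3 = 0 ∧ x1 + x2 = 0) ∧ ¬(x0 + x3 = 0 ∧ x1 + x4 = 0) ∧ ¬(x0 + x3 = 0 ∧ x1 + x5 = 0) ∧ ¬(x0 + x3 = 0 ∧ x2 + x4 = 0) ∧ ¬(x0 + x3 = 0 ∧ x2 + x5 = 0) ∧ ¬(x0 + x3 = 0 ∧ x4 + x5 = 0) ∧ ¬(x0 + x4 = 0 ∧ x1 + x2 = 0) ∧ ¬(x0 + x4 = 0 ∧ x1 + x3 = 0) ∧ ¬(x0 + x4 = 0 ∧ x1 + x5 = 0) ∧ ¬(x0 + x4 = 0 ∧ x2 + x3 = 0) ∧ ¬(x0 + x4 = 0 ∧ x2 + x5 = 0) ∧ ¬(x0 + x4 = 0 ∧ x3 + x5 = 0) ∧ ¬(x0 + x5 = 0 ∧ x1 + x2 = 0) ∧ ¬(x0 + x5 = 0 ∧ x1 + x3 = 0) ∧ ¬(x0 + x5 = 0 ∧ x1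 + x4 = 0) ∧ ¬(x0 + x5 = 0 ∧ x2 + x3 = 0) ∧ ¬(x0 + x5 = 0 ∧ x2 + x4 = 0) ∧ ¬(x0 + x5 = 0 ∧ x3 + x4 = 0) ∧ ¬(x1 + x2 = 0 ∧ x3 + x4 = 0) ∧ ¬(x1 + x2 = 0 ∧ x3 + x5 = 0) ∧ ¬(x1 + x2 = 0 ∧ x4 + x5 = 0) ∧ ¬(x1 + x3 = 0 ∧ x2 + x4 = 0) ∧ ¬(x1 + x3 = 0 ∧ x2 + x5 = 0) ∧ ¬(x1 + x3 = 0 ∧ x4 + x5 = 0) ∧ ¬(x1 + x4 = 0 ∧ x2 + x3 = 0) ∧ ¬(x1 + x4 = 0 ∧ x2 + x5 = 0) ∧ ¬(x1 + x4 = 0 ∧ x3 + x5 = 0) ∧ ¬(x1 + x5 = 0 ∧ x2 + x3 = 0) ∧ ¬(x1 + x5 = 0 ∧ x2 + x4 = 0) ∧ ¬(x1 + x5 = 0 ∧ x3 + x4 = 0) ∧ ¬(x2 + x3 = 0 ∧ x4 + x5 = 0) ∧ ¬(x2 + x4 = 0 ∧ x3 + x5 = 0) ∧ ¬(x2 + x5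 = 0 ∧ x3 + x4 = 0)) →
    x0*x1 + x0*x2 + x0*x3 + x0*x4 + x0*x5 + x1*x2 + x1*x3 + x1*x4 + x1*x5 + x2*x3 + x2*x4 + x2*x5 + x3*x4 + x3*x5 + x4*x5 = 0 ∧ 3 * (x0*x1 + x0*x2 + x0*x3 + x0*x4 + x0*x5 + x1*x2 + x1*x3 + x1*x4 + x1*x5 + x2*x3 + x2*x4 + x2*x5 + x3*x4 + x3*x5 + x4*x5) ^ 2 - (x0*x1*x2*x3 + x0*x1*x2*x4 + x0*x1*x2*x5 + x0*x1*x3*x4 + x0*x1*x3*x5 + x0*x1*x4*x5 + x0*x2*x3*x4 + x0*x2*x3*x5 + x0*x2*x4*x5 + x0*x3*x4*x5 + x1*x2*x3*x4 + x1*x2*x3*x5 + x1*x2*x4*x5 + x1*x3*x4*x5 + x2*x3*x4*x5) = 0 := by decide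

theorem five_dvd_p1_and_p2 (q : Fin 6 → ℤ) (h : BazaikinFree q)
    (h5 : 5 ∣ esymm 3 q) :
    (5 ∣ esymm 2 q) ∧ (5 ∣ (3 * (esymm 2 q) ^ 2 - esymm 4 q)) := by
  obtain ⟨hsum, -, hgcd⟩ := h
  have hp : ∀ a b c d : Fin 6, a ≠ b → a ≠ c → a ≠ d → b ≠ c → b ≠ d → c ≠ d →
      ¬(((q a : ZMod 5) + (q b : ZMod 5) = 0) ∧ ((q c : ZMod 5) + (q d : ZMod 5) = 0)) := by
    intro a b c d hab hac had hbc hbd hcd hh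
    obtain ⟨h1, h2⟩ := hh
    have d1 : ((5 : ℕ) : ℤ) ∣ q a + q b := by
      rw [← ZMod.intCast_zmod_eq_zero_iff_dvd]; push_cast; exact h1
    have d2 : ((5 : ℕ) : ℤ) ∣ q c + q d := by
      rw [← ZMod.intCast_zmod_eq_zero_iff_dvd]; push_cast; exact h2
    have d3 := Int.dvd_gcd d1 d2
    rw [hgcd a b c d hab hac had hbc hbd hcd] at d3
    norm_num at d3
  have hs : (q 0 : ZMod 5) + q 1 + q 2 + q 3 + q 4 + q 5 = 0 := by
    rw [Fin.sum_univ_six] at hsum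
    have := congrArg (fun z : ℤ => (z : ZMod 5)) hsum
    push_cast at this
    linear_combination this
  have h3 : ((esymm 3 q : ℤ) : ZMod 5) = 0 := by
    rw [ZMod.intCast_zmod_eq_zero_iff_dvd]; exact_mod_cast h5
  rw [esymm3_expand] at h3
  push_cast at h3
  obtain ⟨c2, c24⟩ := key5 (q 0 : ZMod 5) (q 1) (q 2) (q 3) (q 4) (q 5) hs
    (by linear_combination h3)
    ⟨hp 0 1 2 3 (by decide) (by decide) (by decide) (by decide) (by decide) (by decide), hp 0 1 2 4 (by decide) (by decide) (by decide) (by decide) (by decide) (by decide), hp 0 1 2 5 (by decide) (by decide) (by decide) (by decide) (by decide) (by decide), hp 0 1 3 4 (by decide) (by decide) (by decide) (by decide) (by decide) (by decide), hp 0 1 3 5 (by decide) (by decide) (by decide) (by decide) (by decide) (by decide), hp 0 1 4 5 (by decide) (by decide) (by decide) (by decide) (by decide) (by decide), hp 0 2 1 3 (by decide) (by decide) (by decide) (by decide) (by decide) (by decide), hp 0 2 1 4 (by decide) (by decide) (by decide) (by decide) (by decide) (by decide), hp 0 2 1 5 (by decide) (by decide) (by decide) (by decide) (by decide) (by decide),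 hp 0 2 3 4 (by decide) (by decide) (by decide) (by decide) (by decide) (by decide), hp 0 2 3 5 (by decide) (by decide) (by decide) (by decide) (by decide) (by decide), hp 0 2 4 5 (by decide) (by decide) (by decide) (by decide) (by decide) (by decide), hp 0 3 1 2 (by decide) (by decide) (by decide) (by decide) (by decide) (by decide), hp 0 3 1 4 (by decide) (by decide) (by decide) (by decide) (by decide) (by decide), hp 0 3 1 5 (by decide) (by decide) (by decide) (by decide) (by decide) (by decide), hp 0 3 2 4 (by decide) (by decide) (by decide) (by decide) (by decide) (by decide), hp 0 3 2 5 (by decide) (by decide) (by decide) (by decide) (by decide) (by decide), hp 0 3 4 5 (by decide) (by decide) (by decide) (by decide) (by decide) (by decide), hp 0 4 1 2 (by decide) (by decide) (by decide) (by decide) (by decide) (by decide), hp 0 4 1 3 (by decide) (by decide) (by decide) (by decide) (by decide) (by decide), hp 0 4 1 5 (by decide) (by decide) (by decide) (by decide) (by decide) (by decide), hp 0 4 2 3 (by decide) (by decide) (by decide) (by decide) (by decide) (by decide), hp 0 4 2 5 (by decide) (by decide) (by decide) (by decide) (by decide) (by decide), hp 0 4 3 5 (by decide) (by decide) (by decide)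 (by decide) (by decide) (by decide), hp 0 5 1 2 (by decide) (by decide) (by decide) (by decide) (by decide) (by decide), hp 0 5 1 3 (by decide) (by decide) (by decide) (by decide) (by decide) (by decide), hp 0 5 1 4 (by decide) (by decide) (by decide) (by decide) (by decide) (by decide), hp 0 5 2 3 (by decide) (by decide) (by decide) (by decide) (by decide) (by decide), hp 0 5 2 4 (by decide) (by decide) (by decide) (by decide) (by decide) (by decide), hp 0 5 3 4 (by decide) (by decide) (by decide) (by decide) (by decide) (by decide), hp 1 2 3 4 (by decide) (by decide) (by decide) (by decide) (by decide) (by decide), hp 1 2 3 5 (by decide) (by decide) (by decide) (by decide) (by decide) (by decide), hp 1 2 4 5 (by decide) (by decide) (by decide) (by decide) (by decide) (by decide), hp 1 3 2 4 (by decide) (by decide) (by decide) (by decide) (by decide) (by decide), hp 1 3 2 5 (by decide) (by decide) (by decide) (by decide) (by decide) (by decide), hp 1 3 4 5 (by decide) (by decide) (by decide) (by decide) (by decide) (by decide), hp 1 4 2 3 (by decide) (by decide) (by decide) (by decide) (by decide) (by decide), hp 1 4 2 5 (by decide) (by decide) (by decide) (by decide) (by decide) (by decide), hp 1 4 3 5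 (by decide) (by decide) (by decide) (by decide) (by decide) (by decide), hp 1 5 2 3 (by decide) (by decide) (by decide) (by decide) (by decide) (by decide), hp 1 5 2 4 (by decide) (by decide) (by decide) (by decide) (by decide) (by decide), hp 1 5 3 4 (by decide) (by decide) (by decide) (by decide) (by decide) (by decide), hp 2 3 4 5 (by decide) (by decide) (by decide) (by decide) (by decide) (by decide), hp 2 4 3 5 (by decide) (by decide) (by decide) (by decide) (by decide) (by decide), hp 2 5 3 4 (by decide) (by decide) (by decide) (by decide) (by decide) (by decide)⟩
  constructor
  · have : ((esymm 2 q : ℤ) : ZMod 5) = 0 := by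
      rw [esymm2_expand]; push_cast; linear_combination c2
    exact_mod_cast (ZMod.intCast_zmod_eq_zero_iff_dvd _ 5).mp this
  · have : ((3 * (esymm 2 q) ^ 2 - esymm 4 q : ℤ) : ZMod 5) = 0 := by
      rw [esymm2_expand, esymm4_expand]; push_cast; linear_combination c24
    exact_mod_cast (ZMod.intCast_zmod_eq_zero_iff_dvd _ 5).mp this
end

section
/- Let q = (q_0, ..., q_5) ∈ ℤ^6 satisfy the Bazaikin freeness condition, and suppose (1/2)(q_0^2 + ... + q_5^2) = 15 and |σ_3(q)| = 40. Then q is, up to reordering the entries and an overall sign change, equal to (−5, 1, 1, 1, 1, 1). (Geometrically: a Bazaikin space with the homeomorphism invariants p_1 = 15 and s = 5 of the Berger space must be the Berger space itself.) -/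
/-
Newton's identity with `σ₁ = 0` gives `∑ qᵢ³ = 3σ₃ = ±120`. Odd entries satisfy `qᵢ² ≥ 1`, and an
odd entry with `qᵢ² < 25` has `|qᵢ|³ ≤ 3qᵢ²`; since `3 ∑ qᵢ² = 90 < 120`, some entry has
`qᵢ² ≥ 25`, hence `= 25` as the other five squares contribute at least `5`. Writing that entry as
`-5ε`, one finds `∑ (qᵢ - ε)² = 30 + 6 = 36 = (-5ε - ε)²`, so every other entry equals `ε`.
-/

theorem eval_esymm {n : ℕ} (k : ℕ) (q : Fin n → ℤ) :
    MvPolynomial.eval q (MvPolynomial.esymm (Fin n) ℤ k) = esymm k q := by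
  simp [MvPolynomial.esymm, esymm]

theorem three_mul_esymm_three_of_sum_eq_zero {n : ℕ} (q : Fin n → ℤ) (h : ∑ i, q i = 0) :
    3 * esymm 3 q = ∑ i, q i ^ 3 := by
  have newton := congrArg (MvPolynomial.eval q) (MvPolynomial.mul_esymm_eq_sum (Fin n) ℤ 3)
  have hdiag : {a ∈ Finset.HasAntidiagonal.antidiagonal 3 | a.1 < 3} =
      {(0, 3), (1, 2), (2, 1)} := by
    decide
  simpa [hdiag, eval_esymm, MvPolynomial.psum, h] using newton

theorem Int.one_le_sq_of_odd {x : ℤ} (hx : Odd x) : 1 ≤ x ^ 2 := by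
  have hx0 : x ≠ 0 := by rintro rfl; simp at hx
  exact (one_le_sq_iff_one_le_abs x).mpr (Int.one_le_abs hx0)

theorem Int.abs_pow_three_le_of_odd_of_sq_lt {x : ℤ} (hx : Odd x) (h : x ^ 2 < 25) :
    |x ^ 3| ≤ 3 * x ^ 2 := by
  have hx5 : |x| < 5 := abs_lt_of_sq_lt_sq (by linarith) (by norm_num)
  have hx3 : |x| ≤ 3 := by
    rw [Int.odd_iff] at hx
    rw [abs_lt] at hx5
    rw [abs_le]
    omega
  calc |x ^ 3| = |x| * x ^ 2 := by rw [abs_pow, pow_succ', sq_abs]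
    _ ≤ 3 * x ^ 2 := by gcongr

theorem exists_sq_eq_twentyfive {q : Fin 6 → ℤ} (hodd : ∀ i, Odd (q i))
    (hp2 : ∑ i, q i ^ 2 = 30) (hp3 : |∑ i, q i ^ 3| = 120) : ∃ i, q i ^ 2 = 25 := by
  obtain ⟨i₀, hi₀⟩ : ∃ i, 25 ≤ q i ^ 2 := by
    by_contra! hsmall
    have hbound : |∑ i, q i ^ 3| ≤ ∑ i, 3 * q i ^ 2 :=
      (Finset.abs_sum_le_sum_abs _ _).trans <| Finset.sum_le_sum fun i _ =>
        Int.abs_pow_three_le_of_odd_of_sq_lt (hodd i) (hsmall i)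
    rw [← Finset.mul_sum, hp2, hp3] at hbound
    norm_num at hbound
  have hle : q i₀ ^ 2 - 1 ≤ ∑ i, (q i ^ 2 - 1) :=
    Finset.single_le_sum (fun i _ => sub_nonneg.mpr (Int.one_le_sq_of_odd (hodd i)))
      (Finset.mem_univ i₀)
  rw [Finset.sum_sub_distrib, hp2] at hle
  exact ⟨i₀, by norm_num at hle; linarith⟩

theorem eq_of_eq_neg_five_mul {q : Fin 6 → ℤ} {ε : ℤ} (hε : ε = 1 ∨ ε = -1)
    (hsum : ∑ i, q i = 0) (hp2 : ∑ i, q i ^ 2 = 30) {i₀ : Fin 6} (hi₀ : q i₀ = -5 * ε) :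
    ∀ j ≠ i₀, q j = ε := by
  have hε2 : ε ^ 2 = 1 := by rcases hε with rfl | rfl <;> norm_num
  have htotal : ∑ i, (q i - ε) ^ 2 = (q i₀ - ε) ^ 2 := by
    calc ∑ i, (q i - ε) ^ 2 = ∑ i, q i ^ 2 - 2 * ε * ∑ i, q i + 6 * ε ^ 2 := by
          simp only [sub_sq, Finset.sum_add_distrib, Finset.sum_sub_distrib, ← Finset.sum_mul,
            ← Finset.mul_sum, Finset.sum_const, Finset.card_univ, Fintype.card_fin, nsmul_eq_mul]
          ring
      _ = (q i₀ - ε) ^ 2 := by rw [hp2, hsum, hi₀]; linear_combination (-30) * hε2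
  rw [← Finset.add_sum_erase _ _ (Finset.mem_univ i₀), add_eq_left,
    Finset.sum_eq_zero_iff_of_nonneg fun _ _ => sq_nonneg _] at htotal
  intro j hj
  exact sub_eq_zero.mp <| pow_eq_zero_iff two_ne_zero |>.mp <|
    htotal j (Finset.mem_erase.mpr ⟨hj, Finset.mem_univ j⟩)

theorem exists_perm_eq_berger {q : Fin 6 → ℤ} {ε : ℤ} (hε : ε = 1 ∨ ε = -1) {i₀ : Fin 6}
    (hi₀ : q i₀ = -5 * ε) (hj : ∀ j ≠ i₀, q j = ε) :
    ∃ (σ : Equiv.Perm (Fin 6)) (ε : ℤ), (ε = 1 ∨ ε = -1) ∧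
      ∀ i : Fin 6, ε * q (σ i) = (![-5, 1, 1, 1, 1, 1] : Fin 6 → ℤ) i := by
  have hεε : ε * ε = 1 := by rcases hε with rfl | rfl <;> norm_num
  refine ⟨Equiv.swap 0 i₀, ε, hε, fun i => ?_⟩
  rcases eq_or_ne i 0 with rfl | hi
  · rw [Equiv.swap_apply_left, hi₀, Matrix.cons_val_zero]
    linear_combination (-5) * hεε
  · have hσi : Equiv.swap 0 i₀ i ≠ i₀ := by
      rwa [Ne, Equiv.swap_apply_eq_iff, Equiv.swap_apply_right]
    rw [hj _ hσi, hεε]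
    fin_cases i <;> simp at hi ⊢

theorem Berger_homeo_invariants_determine_Berger (q : Fin 6 → ℤ) (h : BazaikinFree q)
    (hp1 : (∑ i, q i ^ 2) = 2 * 15) (hs : |esymm 3 q| = 40) :
    ∃ (σ : Equiv.Perm (Fin 6)) (ε : ℤ), (ε = 1 ∨ ε = -1) ∧
      ∀ i : Fin 6, ε * q (σ i) = (![-5, 1, 1, 1, 1, 1] : Fin 6 → ℤ) i := by
  obtain ⟨hsum, hodd, -⟩ := h
  have hp2 : ∑ i, q i ^ 2 = 30 := hp1
  have hp3 : |∑ i, q i ^ 3| = 120 := by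
    rw [← three_mul_esymm_three_of_sum_eq_zero q hsum, abs_mul, hs]
    norm_num
  obtain ⟨i₀, hi₀⟩ := exists_sq_eq_twentyfive hodd hp2 hp3
  obtain ⟨ε, hε, hqi₀⟩ : ∃ ε : ℤ, (ε = 1 ∨ ε = -1) ∧ q i₀ = -5 * ε := by
    rcases sq_eq_sq_iff_eq_or_eq_neg.mp (hi₀.trans (by norm_num : (25 : ℤ) = 5 ^ 2)) with h5 | h5
    exacts [⟨-1, .inr rfl, by rw [h5]; norm_num⟩, ⟨1, .inl rfl, by rw [h5]; norm_num⟩]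
  exact exists_perm_eq_berger hε hqi₀ (eq_of_eq_neg_five_mul hε hsum hp2 hqi₀)
end
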